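/- arXiv:1911.06497 — 9 statements merged into one kernel-verified Lean document; each statement's English description precedes it below -/
import Mathlib

section
/- If D is a Ryser design of order v, then there exist integers r₁ and r₂ with r₁ ≠ r₂ and r₁ + r₂ = v + 1 such that every point of D occurs either in exactly r₁ blocks or in exactly r₂ blocks. -/
/-!
Let `N` be the point–block incidence matrix and `e B = |B| - λ`, so that
`Nᵀ N = diag e + λ J`. By Sherman–Morrison this Gram matrix has inverse
`G = diag e⁻¹ - β e⁻¹ (e⁻¹)ᵀ` with `β = λ / (1 + λ ∑ 1 / e B)`, and since `N` is square,
`N G Nᵀ = 1`. Put `ρ = N e⁻¹`. The diagonal of `N G Nᵀ = 1` says `ρ x (1 - β ρ x) = 1`, so `ρ`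
takes at most two values, and two distinct ones add up to `1 / β`; applied to the all-ones vector
it says `r x = 1 + β (v - 1) ρ x`. If `ρ` were constant, `Nᵀ ρ = (1 + λ ∑ 1 / e B) • 1` would
force all blocks to have the same size. Hence `ρ`, and with it the replication number, takes
exactly two values, and these add up to `2 + (v - 1) = v + 1`.
-/

open scoped symmDiff

/-- Block complementation of a family of blocks with respect to a block `A`:
the new family is `{A} ∪ {A ∆ B : B ∈ L, B ≠ A}`. -/
def blockComp {α : Type*} [DecidableEq α] (A : Finset α) (L : Finset (Finset α)) :
    Finset (Finset α) :=
  insert A ((L.erase A).image (fun B => A ∆ B))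

/-- The replication number of a point `x`: the number of blocks of `L` containing `x`. -/
def repl {α : Type*} [DecidableEq α] (L : Finset (Finset α)) (x : α) : ℕ :=
  (L.filter (fun B => x ∈ B)).card

/-- A Ryser design on point set `X` with block family `L` and index `lam`. -/
def IsRyserDesign {α : Type*} [DecidableEq α] (X : Finset α) (L : Finset (Finset α))
    (lam : ℕ) : Prop :=
  1 ≤ lam ∧ L.card = X.card ∧ (∀ B ∈ L, B ⊆ X) ∧
    (∀ B₁ ∈ L, ∀ B₂ ∈ L, B₁ ≠ B₂ → (B₁ ∩ B₂).card = lam) ∧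
    (∀ B ∈ L, lam < B.card) ∧
    (∃ B₁ ∈ L, ∃ B₂ ∈ L, B₁.card ≠ B₂.card)

/-- A symmetric design on point set `X` with block family `L`, block size `k` and index `lam`. -/
def IsSymmetricDesign {α : Type*} [DecidableEq α] (X : Finset α) (L : Finset (Finset α))
    (k lam : ℕ) : Prop :=
  1 ≤ lam ∧ L.card = X.card ∧ (∀ B ∈ L, B ⊆ X) ∧
    (∀ B₁ ∈ L, ∀ B₂ ∈ L, B₁ ≠ B₂ → (B₁ ∩ B₂).card = lam) ∧
    (∀ B ∈ L, B.card = k) ∧ lam < k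

open Matrix

section Quadratic

variable {R : Type*} [CommRing R] [IsDomain R] {β t u w : R}

theorem mul_add_eq_one_of_mul_one_sub_eq_one (ht : t * (1 - β * t) = 1)
    (hu : u * (1 - β * u) = 1) (htu : t ≠ u) : β * (t + u) = 1 := by
  have h : (t - u) * (1 - β * (t + u)) = 0 := by linear_combination ht - hu
  rcases mul_eq_zero.mp h with h | h
  · exact absurd (sub_eq_zero.mp h) htu
  · exact (sub_eq_zero.mp h).symm

theorem eq_or_eq_of_mul_one_sub_eq_one (ht : t * (1 - β * t) = 1) (hu : u * (1 - β * u) = 1)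
    (hw : w * (1 - β * w) = 1) (htu : t ≠ u) : w = t ∨ w = u := by
  refine or_iff_not_imp_left.mpr fun hwt => ?_
  have hβ : β ≠ 0 := left_ne_zero_of_mul_eq_one (mul_add_eq_one_of_mul_one_sub_eq_one ht hu htu)
  have h : β * (w - u) = 0 := by
    linear_combination mul_add_eq_one_of_mul_one_sub_eq_one hw ht hwt -
      mul_add_eq_one_of_mul_one_sub_eq_one ht hu htu
  exact sub_eq_zero.mp ((mul_eq_zero.mp h).resolve_left hβ)

end Quadratic

namespace Matrix

variable {K P Q : Type*} [Field K] [Fintype P] [DecidableEq Q]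

theorem transpose_mulVec_one_eq_add {N : Matrix P Q K} {e : Q → K} {c : K}
    (hN : ∀ x i, IsIdempotentElem (N x i)) (hgram : Nᵀ * N = diagonal e + c • vecMulVec 1 1) :
    Nᵀ *ᵥ 1 = e + c • 1 := by
  ext i
  have h := congrFun (congrFun hgram i) i
  simp only [mul_apply, transpose_apply, (hN _ i).eq] at h
  simp [mulVec, dotProduct, h]

variable [Fintype Q]

theorem diagonal_inv_sub_smul_vecMulVec_mul_eq_one {e : Q → K} (he : ∀ i, e i ≠ 0) {c β : K}
    (hβ : β * (1 + c * ∑ i, (e i)⁻¹) = c) :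
    (diagonal e⁻¹ - β • vecMulVec e⁻¹ e⁻¹) * (diagonal e + c • vecMulVec 1 1) = 1 := by
  have hV : vecMulVec e⁻¹ e⁻¹ * diagonal e = vecMulVec e⁻¹ 1 := by
    rw [vecMulVec_mul]; congr 1; ext i; simp [vecMul_diagonal, he]
  have hD : diagonal e⁻¹ * diagonal e = 1 := by
    rw [diagonal_mul_diagonal, ← diagonal_one]; congr 1; ext i; simp [he]
  rw [sub_mul, mul_add, mul_add, hD, mul_smul_comm, smul_mul_assoc, smul_mul_assoc, hV,
    mul_smul_comm, mul_vecMulVec, vecMulVec_mul_vecMulVec]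
  ext i j
  simp [mulVec_diagonal, dotProduct]
  linear_combination -(e i)⁻¹ * hβ

theorem diagonal_inv_sub_smul_vecMulVec_mulVec {e : Q → K} (he : ∀ i, e i ≠ 0) {c β : K}
    (hβ : β * (1 + c * ∑ i, (e i)⁻¹) = c) :
    (diagonal e⁻¹ - β • vecMulVec e⁻¹ e⁻¹) *ᵥ (e + c • 1) =
      1 - (β * (Fintype.card Q - 1)) • e⁻¹ := by
  have hdot : e⁻¹ ⬝ᵥ (e + c • 1) = Fintype.card Q + c * ∑ i, (e i)⁻¹ := by
    simp [dotProduct, mul_add, Finset.sum_add_distrib, he, Finset.sum_mul, mul_comm c]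
  ext i
  rw [sub_mulVec, smul_mulVec, vecMulVec_mulVec, hdot]
  simp [mulVec_diagonal, mul_add]
  linear_combination -(e i)⁻¹ * hβ + mul_inv_cancel₀ (he i)

variable [DecidableEq P] {N : Matrix P Q K} {e : Q → K} {c β : K}

theorem mul_mul_transpose_eq_one (hcard : Fintype.card P = Fintype.card Q) (he : ∀ i, e i ≠ 0)
    (hβ : β * (1 + c * ∑ i, (e i)⁻¹) = c) (hgram : Nᵀ * N = diagonal e + c • vecMulVec 1 1) :
    N * (diagonal e⁻¹ - β • vecMulVec e⁻¹ e⁻¹) * Nᵀ = 1 := by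
  rw [Matrix.mul_assoc, mul_eq_one_comm_of_card_eq _ _ _ hcard, Matrix.mul_assoc, hgram,
    diagonal_inv_sub_smul_vecMulVec_mul_eq_one he hβ]

theorem mulVec_inv_mul_one_sub_eq_one (hN : ∀ x i, IsIdempotentElem (N x i))
    (hcard : Fintype.card P = Fintype.card Q) (he : ∀ i, e i ≠ 0)
    (hβ : β * (1 + c * ∑ i, (e i)⁻¹) = c) (hgram : Nᵀ * N = diagonal e + c • vecMulVec 1 1)
    (x : P) : (N *ᵥ e⁻¹) x * (1 - β * (N *ᵥ e⁻¹) x) = 1 := by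
  have h := congrFun (congrFun (mul_mul_transpose_eq_one hcard he hβ hgram) x) x
  rw [Matrix.mul_sub, Matrix.sub_mul, Matrix.mul_smul, Matrix.smul_mul, mul_vecMulVec,
    vecMulVec_mul, vecMul_transpose] at h
  simp only [sub_apply, smul_apply, vecMulVec_apply, one_apply_eq, smul_eq_mul] at h
  rw [mul_apply] at h
  simp only [mul_diagonal, transpose_apply, mul_right_comm _ _ (N x _), (hN x _).eq] at h
  change (N *ᵥ e⁻¹) x - _ = _ at h
  linear_combination h

theorem mulVec_one_eq_one_add_smul (hN : ∀ x i, IsIdempotentElem (N x i))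
    (hcard : Fintype.card P = Fintype.card Q) (he : ∀ i, e i ≠ 0)
    (hβ : β * (1 + c * ∑ i, (e i)⁻¹) = c) (hgram : Nᵀ * N = diagonal e + c • vecMulVec 1 1) :
    N *ᵥ 1 = 1 + (β * (Fintype.card Q - 1)) • (N *ᵥ e⁻¹) := by
  have h := congrArg (· *ᵥ (1 : P → K)) (mul_mul_transpose_eq_one hcard he hβ hgram)
  simp only [one_mulVec, ← mulVec_mulVec, transpose_mulVec_one_eq_add hN hgram,
    diagonal_inv_sub_smul_vecMulVec_mulVec he hβ, mulVec_sub, mulVec_smul] at h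
  rw [← h]
  abel

theorem exists_mulVec_inv_ne (hN : ∀ x i, IsIdempotentElem (N x i))
    (hcard : Fintype.card P = Fintype.card Q) (he : ∀ i, e i ≠ 0)
    (hβ : β * (1 + c * ∑ i, (e i)⁻¹) = c) (hgram : Nᵀ * N = diagonal e + c • vecMulVec 1 1)
    (hne : ∃ i j, e i ≠ e j) : ∃ x y, (N *ᵥ e⁻¹) x ≠ (N *ᵥ e⁻¹) y := by
  obtain ⟨i, j, hij⟩ := hne
  by_contra! hconst
  obtain ⟨x₀⟩ : Nonempty P := Fintype.card_pos_iff.mp (hcard ▸ Fintype.card_pos_iff.mpr ⟨i⟩)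
  have hρ : N *ᵥ e⁻¹ = (N *ᵥ e⁻¹) x₀ • 1 := funext fun x => by simp [hconst x x₀]
  have hcol : ∀ k, (N *ᵥ e⁻¹) x₀ * (e k + c) = 1 + c * ∑ i, (e i)⁻¹ := fun k => by
    have h := congrFun (congrArg (Nᵀ *ᵥ ·) hρ) k
    simp only [mulVec_mulVec, hgram, mulVec_smul, transpose_mulVec_one_eq_add hN hgram, add_mulVec,
      smul_mulVec, vecMulVec_mulVec] at h
    simpa [mulVec_diagonal, he, dotProduct] using h.symm
  have hρ₀ : (N *ᵥ e⁻¹) x₀ ≠ 0 :=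
    left_ne_zero_of_mul_eq_one (mulVec_inv_mul_one_sub_eq_one hN hcard he hβ hgram x₀)
  exact hij (by simpa using mul_left_cancel₀ hρ₀ ((hcol i).trans (hcol j).symm))

theorem exists_mulVec_one_eq_or_eq [CharZero K] (hN : ∀ x i, IsIdempotentElem (N x i))
    (hcard : Fintype.card P = Fintype.card Q) (he : ∀ i, e i ≠ 0)
    (hs : 1 + c * ∑ i, (e i)⁻¹ ≠ 0) (hgram : Nᵀ * N = diagonal e + c • vecMulVec 1 1)
    (hne : ∃ i j, e i ≠ e j) :
    ∃ x y, (N *ᵥ 1) x ≠ (N *ᵥ 1) y ∧ (N *ᵥ 1) x + (N *ᵥ 1) y = Fintype.card P + 1 ∧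
      ∀ z, (N *ᵥ 1) z = (N *ᵥ 1) x ∨ (N *ᵥ 1) z = (N *ᵥ 1) y := by
  set β := c / (1 + c * ∑ i, (e i)⁻¹)
  have hβ : β * (1 + c * ∑ i, (e i)⁻¹) = c := div_mul_cancel₀ c hs
  have hquad := mulVec_inv_mul_one_sub_eq_one hN hcard he hβ hgram
  have hrepl (z : P) : (N *ᵥ 1) z = 1 + β * (Fintype.card Q - 1) * (N *ᵥ e⁻¹) z := by
    simp [mulVec_one_eq_one_add_smul hN hcard he hβ hgram]
  obtain ⟨x, y, hxy⟩ := exists_mulVec_inv_ne hN hcard he hβ hgram hne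
  have hsum := mul_add_eq_one_of_mul_one_sub_eq_one (hquad x) (hquad y) hxy
  have hμ : β * (Fintype.card Q - 1) ≠ 0 := by
    obtain ⟨i, j, hij⟩ := hne
    have hQ : 1 < Fintype.card Q := Fintype.one_lt_card_iff.mpr ⟨i, j, fun h => hij (h ▸ rfl)⟩
    exact mul_ne_zero (left_ne_zero_of_mul_eq_one hsum)
      (sub_ne_zero.mpr (by exact_mod_cast hQ.ne'))
  refine ⟨x, y, ?_, ?_, fun z => ?_⟩
  · rw [hrepl, hrepl]
    exact fun h => hxy (mul_left_cancel₀ hμ (add_left_cancel h))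
  · rw [hrepl, hrepl, hcard]
    linear_combination ((Fintype.card Q : K) - 1) * hsum
  · rcases eq_or_eq_of_mul_one_sub_eq_one (hquad x) (hquad y) (hquad z) hxy with h | h <;>
      simp [hrepl, h]

end Matrix

section IncidenceMatrix

variable {α : Type*} [DecidableEq α]

def incidenceMatrix (X : Finset α) (L : Finset (Finset α)) : Matrix X L ℚ :=
  of fun x B => if (x : α) ∈ (B : Finset α) then 1 else 0

theorem isIdempotentElem_incidenceMatrix_apply (X : Finset α) (L : Finset (Finset α)) (x : X)
    (B : L) : IsIdempotentElem (incidenceMatrix X L x B) := by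
  simp only [incidenceMatrix, of_apply]; split_ifs <;> simp [IsIdempotentElem]

theorem incidenceMatrix_mulVec_one (X : Finset α) (L : Finset (Finset α)) (x : X) :
    (incidenceMatrix X L *ᵥ 1) x = repl L x := by
  simp only [incidenceMatrix, mulVec, dotProduct, of_apply, Pi.one_apply, mul_one, repl]
  rw [Finset.sum_coe_sort L (fun B => if (x : α) ∈ B then (1 : ℚ) else 0), Finset.sum_boole]

theorem transpose_incidenceMatrix_mul_apply {X : Finset α} {L : Finset (Finset α)}
    (hsub : ∀ B ∈ L, B ⊆ X) (B C : L) :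
    ((incidenceMatrix X L)ᵀ * incidenceMatrix X L) B C = ((B : Finset α) ∩ C).card := by
  simp only [incidenceMatrix, mul_apply, transpose_apply, of_apply, ite_zero_mul_ite_zero,
    mul_one]
  rw [Finset.sum_coe_sort X (fun x => if x ∈ (B : Finset α) ∧ x ∈ (C : Finset α) then 1 else 0),
    Finset.sum_boole]
  congr 2
  ext x
  simp only [Finset.mem_filter, Finset.mem_inter]
  exact ⟨fun h => h.2, fun h => ⟨hsub B B.2 h.1, h⟩⟩

theorem IsRyserDesign.transpose_mul_incidenceMatrix {X : Finset α} {L : Finset (Finset α)}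
    {lam : ℕ} (hD : IsRyserDesign X L lam) :
    (incidenceMatrix X L)ᵀ * incidenceMatrix X L =
      diagonal (fun B : L => ((B : Finset α).card - lam : ℚ)) + (lam : ℚ) • vecMulVec 1 1 := by
  obtain ⟨-, -, hsub, hinter, -⟩ := hD
  ext B C
  rw [transpose_incidenceMatrix_mul_apply hsub]
  by_cases h : B = C
  · subst h; simp
  · simp [diagonal_apply_ne _ h, hinter B B.2 C C.2 (fun h' => h (Subtype.ext h'))]

end IncidenceMatrix

/-- **Ryser–Woodall theorem.** In a Ryser design of order `v` there are integers
`r₁ ≠ r₂` with `r₁ + r₂ = v + 1` such that every point occurs in exactly `r₁`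
or exactly `r₂` blocks. -/
theorem ryser_woodall {α : Type*} [DecidableEq α] (v lam : ℕ)
    (X : Finset α) (L : Finset (Finset α)) (hX : X.card = v)
    (hD : IsRyserDesign X L lam) :
    ∃ r₁ r₂ : ℕ, r₁ ≠ r₂ ∧ r₁ + r₂ = v + 1 ∧
      ∀ x ∈ X, repl L x = r₁ ∨ repl L x = r₂ := by
  have hgram := hD.transpose_mul_incidenceMatrix
  obtain ⟨-, hcard, -, -, hlt, B₁, hB₁, B₂, hB₂, hB₁₂⟩ := hD
  have hpos (B : L) : (0 : ℚ) < (B : Finset α).card - lam :=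
    sub_pos.mpr (by exact_mod_cast hlt B B.2)
  have hs : 1 + (lam : ℚ) * ∑ B : L, ((B : Finset α).card - lam : ℚ)⁻¹ ≠ 0 := by
    have : 0 ≤ ∑ B : L, ((B : Finset α).card - lam : ℚ)⁻¹ :=
      Finset.sum_nonneg fun B _ => (inv_pos.mpr (hpos B)).le
    positivity
  obtain ⟨x, y, hxy, hsum, hall⟩ := exists_mulVec_one_eq_or_eq
    (isIdempotentElem_incidenceMatrix_apply X L) (by simp [hcard]) (fun B => (hpos B).ne') hs
    hgram ⟨⟨B₁, hB₁⟩, ⟨B₂, hB₂⟩, by simpa using hB₁₂⟩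
  simp only [incidenceMatrix_mulVec_one, Fintype.card_coe, hX] at hxy hsum hall
  exact ⟨repl L x, repl L y, by exact_mod_cast hxy, by exact_mod_cast hsum,
    fun z hz => by exact_mod_cast hall ⟨z, hz⟩⟩
end

section
/- Let D be a Ryser design with replication numbers r₁ > r₂ on a v-set X and let A be a block of D such that D*A is again a Ryser design. Then r₁(D*A) = r₁(D) and the index of D*A equals |A| - λ(D), where λ(D) is the index of D. -/
open scoped symmDiff

/-- Double counting: the sum of intersection sizes of a block `B` with all other blocks
equals the sum over points of `B` of (replication − 1). -/
lemma sum_inter_card_eq {α : Type*} [DecidableEq α] (L : Finset (Finset α))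
    (B : Finset α) (hB : B ∈ L) :
    ∑ B' ∈ L.erase B, (B ∩ B').card = ∑ x ∈ B, (repl L x - 1) := by
  have h1 : ∀ B' : Finset α, (B ∩ B').card = ∑ x ∈ B, if x ∈ B' then 1 else 0 := by
    intro B'
    rw [← Finset.card_filter]
    congr 1
  calc ∑ B' ∈ L.erase B, (B ∩ B').card
      = ∑ B' ∈ L.erase B, ∑ x ∈ B, if x ∈ B' then 1 else 0 := by
        exact Finset.sum_congr rfl fun B' _ => h1 B'
    _ = ∑ x ∈ B, ∑ B' ∈ L.erase B, if x ∈ B' then 1 else 0 := Finset.sum_comm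
    _ = ∑ x ∈ B, (repl L x - 1) := by
        refine Finset.sum_congr rfl fun x hx => ?_
        rw [← Finset.card_filter]
        have : Finset.filter (fun B' => x ∈ B') (L.erase B)
            = (Finset.filter (fun B' => x ∈ B') L).erase B := by
          simp [Finset.filter_erase]
        rw [this, Finset.card_erase_of_mem (by simp [Finset.mem_filter, hB, hx])]
        rfl

/-- A Ryser design cannot have a constant replication number. -/
lemma const_repl_false {α : Type*} [DecidableEq α] (X : Finset α) (L : Finset (Finset α))
    (lam : ℕ) (hD : IsRyserDesign X L lam) (r : ℕ) (h : ∀ x ∈ X, repl L x = r) : False := by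
  obtain ⟨hlam, hcard, hsub, hint, _hlt, B₁, hB₁, B₂, hB₂, hne⟩ := hD
  have hBne : B₁ ≠ B₂ := fun h => hne (by rw [h])
  have hv : 2 ≤ L.card := Finset.one_lt_card.mpr ⟨B₁, hB₁, B₂, hB₂, hBne⟩
  have key : ∀ B ∈ L, B.card * (r - 1) = (L.card - 1) * lam := by
    intro B hB
    have h1 := sum_inter_card_eq L B hB
    have h2 : ∑ B' ∈ L.erase B, (B ∩ B').card = (L.card - 1) * lam := by
      rw [Finset.sum_congr rfl fun B' hB' =>
        hint B (hB) B' (Finset.mem_of_mem_erase hB') (fun h => (Finset.ne_of_mem_erase hB') h.symm)]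
      rw [Finset.sum_const, Finset.card_erase_of_mem hB, smul_eq_mul]
    have h3 : ∑ x ∈ B, (repl L x - 1) = B.card * (r - 1) := by
      rw [Finset.sum_congr rfl fun x hx => by rw [h x (hsub B hB hx)]]
      rw [Finset.sum_const, smul_eq_mul]
    rw [← h3, ← h2, h1]
  have k1 := key B₁ hB₁
  have k2 := key B₂ hB₂
  rcases Nat.lt_or_ge r 2 with hr | hr
  · -- r - 1 = 0, so (L.card - 1) * lam = 0, contradiction
    have : r - 1 = 0 := by omega
    rw [this, Nat.mul_zero] at k1
    have : 1 ≤ (L.card - 1) * lam := Nat.one_le_iff_ne_zero.mpr (by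
      intro h0
      rcases Nat.mul_eq_zero.mp h0 with h0 | h0 <;> omega)
    omega
  · have hpos : 0 < r - 1 := by omega
    have : B₁.card = B₂.card := Nat.eq_of_mul_eq_mul_right hpos (k1.trans k2.symm)
    exact hne this

/-- If `D` is a Ryser design with replication numbers `r₁ > r₂` and `D*A` is again a
Ryser design, then the replication numbers of `D*A` are again `r₁ > r₂` (both attained),
and the index of `D*A` is `|A| - λ(D)`. -/
theorem blockComp_repl_and_index {α : Type*} [DecidableEq α] (X : Finset α)
    (L : Finset (Finset α)) (lam lam' r₁ r₂ : ℕ)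
    (hD : IsRyserDesign X L lam)
    (hrepl : ∀ x ∈ X, repl L x = r₁ ∨ repl L x = r₂)
    (hr : r₂ < r₁) (hsum : r₁ + r₂ = X.card + 1)
    (A : Finset α) (hA : A ∈ L)
    (hD' : IsRyserDesign X (blockComp A L) lam') :
    (∀ x ∈ X, repl (blockComp A L) x = r₁ ∨ repl (blockComp A L) x = r₂) ∧
      (∃ x ∈ X, repl (blockComp A L) x = r₁) ∧
      (∃ x ∈ X, repl (blockComp A L) x = r₂) ∧
      lam' = A.card - lam := by
  obtain ⟨hlam, hcard, hsub, hint, hlt, hne⟩ := hD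
  -- blocks are nonempty
  have hAnot : A ∉ (L.erase A).image (fun B => A ∆ B) := by
    intro h
    obtain ⟨B, hB, hAB⟩ := Finset.mem_image.mp h
    have : B = ∅ := symmDiff_eq_left.mp hAB
    have h2 := hlt B (Finset.mem_of_mem_erase hB)
    rw [this] at h2
    simp at h2
  have hinj : Set.InjOn (fun B => A ∆ B) ↑(L.erase A) := by
    intro B hB C hC h
    have := congrArg (fun t => A ∆ t) h
    simpa using this
  -- replication formulas
  have key1 : ∀ x ∈ A, repl (blockComp A L) x + repl L x = L.card + 1 := by
    intro x hx
    unfold blockComp repl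
    rw [Finset.filter_insert, if_pos hx, Finset.card_insert_of_notMem
      (fun h => hAnot (Finset.mem_of_mem_filter _ h)),
      Finset.filter_image, Finset.card_image_of_injOn
        (hinj.mono (fun B hB => by simp at hB ⊢; tauto))]
    have e1 : Finset.filter (fun B => x ∈ A ∆ B) (L.erase A)
        = Finset.filter (fun B => x ∉ B) (L.erase A) := by
      apply Finset.filter_congr
      intro B _
      simp [Finset.mem_symmDiff, hx]
    rw [e1]
    have e2 : (Finset.filter (fun B => x ∈ B) L).card
        = (Finset.filter (fun B => x ∈ B) (L.erase A)).card + 1 := by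
      have : Finset.filter (fun B => x ∈ B) (L.erase A)
          = (Finset.filter (fun B => x ∈ B) L).erase A := by simp [Finset.filter_erase]
      rw [this, Finset.card_erase_of_mem (by simp [Finset.mem_filter, hA, hx])]
      have : 1 ≤ (Finset.filter (fun B => x ∈ B) L).card :=
        Finset.card_pos.mpr ⟨A, by simp [Finset.mem_filter, hA, hx]⟩
      omega
    have e3 := Finset.card_filter_add_card_filter_not
      (s := L.erase A) (p := fun B => x ∈ B)
    have e4 : (L.erase A).card = L.card - 1 := Finset.card_erase_of_mem hA
    have hL1 : 1 ≤ L.card := Finset.card_pos.mpr ⟨A, hA⟩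
    simp only [e4] at e3
    omega
  have key2 : ∀ x, x ∉ A → repl (blockComp A L) x = repl L x := by
    intro x hx
    unfold blockComp repl
    rw [Finset.filter_insert, if_neg hx,
      Finset.filter_image, Finset.card_image_of_injOn
        (hinj.mono (fun B hB => by simp at hB ⊢; tauto))]
    have e1 : Finset.filter (fun B => x ∈ A ∆ B) (L.erase A)
        = Finset.filter (fun B => x ∈ B) (L.erase A) := by
      apply Finset.filter_congr
      intro B _
      simp [Finset.mem_symmDiff, hx]
    rw [e1]
    have : Finset.filter (fun B => x ∈ B) (L.erase A)
        = (Finset.filter (fun B => x ∈ B) L).erase A := by simp [Finset.filter_erase]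
    rw [this, Finset.erase_eq_of_notMem (by simp [hx])]
  -- part 1
  have part1 : ∀ x ∈ X, repl (blockComp A L) x = r₁ ∨ repl (blockComp A L) x = r₂ := by
    intro x hxX
    by_cases hx : x ∈ A
    · have h1 := key1 x hx
      rcases hrepl x hxX with h | h <;> rw [h] at h1 <;> rw [hcard] at h1 <;> omega
    · rw [key2 x hx]; exact hrepl x hxX
  refine ⟨part1, ?_, ?_, ?_⟩
  · -- r₁ attained
    by_contra hcon
    push_neg at hcon
    exact const_repl_false X (blockComp A L) lam' hD' r₂ (fun x hx => by
      rcases part1 x hx with h | h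
      · exact absurd h (hcon x hx)
      · exact h)
  · -- r₂ attained
    by_contra hcon
    push_neg at hcon
    exact const_repl_false X (blockComp A L) lam' hD' r₁ (fun x hx => by
      rcases part1 x hx with h | h
      · exact h
      · rcases part1 x hx with h' | h'
        · exact h'
        · exact absurd h' (hcon x hx))
  · -- index
    obtain ⟨B₁, hB₁, B₂, hB₂, hBne⟩ := hne
    have hv : 2 ≤ L.card := Finset.one_lt_card.mpr ⟨B₁, hB₁, B₂, hB₂, fun h => hBne (by rw [h])⟩
    have hA' : A ∈ blockComp A L := Finset.mem_insert_self _ _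
    have hcard' : (blockComp A L).card = L.card := by
      rw [hD'.2.1, hcard]
    obtain ⟨B', hB', hB'ne⟩ := Finset.exists_mem_ne (by omega : 1 < (blockComp A L).card) A
    obtain ⟨B, hB, hABeq⟩ := Finset.mem_image.mp (Finset.mem_insert.mp hB' |>.resolve_left hB'ne)
    have hint' := hD'.2.2.2.1 A hA' B' hB' (fun h => hB'ne h.symm)
    have hBL := Finset.mem_of_mem_erase hB
    have hBA : B ≠ A := Finset.ne_of_mem_erase hB
    have hABlam : (A ∩ B).card = lam := hint A hA B hBL (fun h => hBA h.symm)
    have hset : A ∩ B' = A \ B := by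
      rw [← hABeq]
      ext y
      simp only [Finset.mem_inter, Finset.mem_symmDiff, Finset.mem_sdiff]
      tauto
    have hsd : (A ∩ B).card + (A \ B).card = A.card := Finset.card_inter_add_card_sdiff A B
    rw [hset] at hint'
    omega
end

section
/- Let A be a block of a Ryser design of index λ with replication numbers r₁ > r₂, and write ρ = (r₁-1)/(r₂-1) = c/d in lowest terms and a = c - d. Then there is an integer t such that τ₁(A) = λ - t·d, τ₂(A) = λ + t·c, and |A| = 2λ + t·a; consequently τ₁(A) = τ₂(A) = λ if |A| = 2λ, τ₁(A) > λ > τ₂(A) if |A| < 2λ, and τ₂(A) > λ > τ₁(A) if |A| > 2λ. -/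
open scoped symmDiff

/-- For a block `A` of a Ryser design of index `λ` with replication numbers `r₁ > r₂`,
writing `ρ = (r₁-1)/(r₂-1) = c/d` in lowest terms and `a = c - d`, there is an integer
`t` with `τ₁(A) = λ - t·d`, `τ₂(A) = λ + t·c` and `|A| = 2λ + t·a`; consequently
`τ₁(A) = τ₂(A) = λ` if `A` is average, `τ₁(A) > λ > τ₂(A)` if `A` is small, and
`τ₂(A) > λ > τ₁(A)` if `A` is large. -/
theorem block_size_form {α : Type*} [DecidableEq α] (X : Finset α)
    (L : Finset (Finset α)) (lam r₁ r₂ c d : ℕ)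
    (hD : IsRyserDesign X L lam)
    (hrepl : ∀ x ∈ X, repl L x = r₁ ∨ repl L x = r₂)
    (hr : r₂ < r₁) (hsum : r₁ + r₂ = X.card + 1)
    (hd : 0 < d) (hcd : Nat.Coprime c d) (hρ : (r₁ - 1) * d = (r₂ - 1) * c)
    (A : Finset α) (hA : A ∈ L) :
    ∃ t : ℤ,
      ((X.filter (fun x => repl L x = r₁) ∩ A).card : ℤ) = (lam : ℤ) - t * d ∧
      ((X.filter (fun x => repl L x = r₂) ∩ A).card : ℤ) = (lam : ℤ) + t * c ∧
      (A.card : ℤ) = 2 * lam + t * ((c : ℤ) - d) ∧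
      (A.card = 2 * lam →
        (X.filter (fun x => repl L x = r₁) ∩ A).card = lam ∧
        (X.filter (fun x => repl L x = r₂) ∩ A).card = lam) ∧
      (A.card < 2 * lam →
        (X.filter (fun x => repl L x = r₂) ∩ A).card < lam ∧
        lam < (X.filter (fun x => repl L x = r₁) ∩ A).card) ∧
      (2 * lam < A.card →
        (X.filter (fun x => repl L x = r₁) ∩ A).card < lam ∧
        lam < (X.filter (fun x => repl L x = r₂) ∩ A).card) := by
  obtain ⟨hlam, hcard, hsub, hint, hblt, -⟩ := hD
  have hAX : A ⊆ X := hsub A hA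
  -- r₂ ≥ 2
  have hr2 : 2 ≤ r₂ := by
    by_contra h
    push_neg at h
    have h1 : r₂ - 1 = 0 := by omega
    rw [h1, zero_mul] at hρ
    have h2 : r₁ - 1 = 0 ∨ d = 0 := Nat.mul_eq_zero.mp hρ
    have h3 : r₁ = 1 := by omega
    have hX0 : X.card = 0 := by omega
    have hL0 : L.card = 0 := by omega
    rw [Finset.card_eq_zero.mp hL0] at hA
    exact absurd hA (Finset.notMem_empty A)
  have hc : d < c := by
    by_contra h
    push_neg at h
    have h1 : (r₂ - 1) * c ≤ (r₂ - 1) * d := Nat.mul_le_mul_left _ h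
    have h2 : (r₂ - 1) * d < (r₁ - 1) * d :=
      (Nat.mul_lt_mul_right hd).mpr (by omega)
    omega
  set τ₁ := (X.filter (fun x => repl L x = r₁) ∩ A).card with hτ₁
  set τ₂ := (X.filter (fun x => repl L x = r₂) ∩ A).card with hτ₂
  have hE1A : X.filter (fun x => repl L x = r₁) ∩ A = A.filter (fun x => repl L x = r₁) := by
    ext x
    simp only [Finset.mem_inter, Finset.mem_filter]
    exact ⟨fun ⟨⟨_, h2⟩, h3⟩ => ⟨h3, h2⟩, fun ⟨h1, h2⟩ => ⟨⟨hAX h1, h2⟩, h1⟩⟩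
  have hE2A : X.filter (fun x => repl L x = r₂) ∩ A
      = A.filter (fun x => ¬ repl L x = r₁) := by
    ext x
    simp only [Finset.mem_inter, Finset.mem_filter]
    constructor
    · rintro ⟨⟨hx, h2⟩, h3⟩
      exact ⟨h3, by omega⟩
    · rintro ⟨h1, h2⟩
      have := hrepl x (hAX h1)
      exact ⟨⟨hAX h1, by tauto⟩, h1⟩
  have hpart : τ₁ + τ₂ = A.card := by
    rw [hτ₁, hτ₂, hE1A, hE2A]
    exact Finset.card_filter_add_card_filter_not _
  -- double counting
  have hkey : ∑ x ∈ A, repl L x = A.card + lam * (L.card - 1) := by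
    have h1 : ∑ x ∈ A, repl L x = ∑ B ∈ L, (A ∩ B).card := by
      simp only [repl, Finset.card_filter]
      rw [Finset.sum_comm]
      refine Finset.sum_congr rfl fun B _ => ?_
      rw [← Finset.card_filter, Finset.filter_mem_eq_inter]
    have h2 : (A ∩ A).card + ∑ B ∈ L.erase A, (A ∩ B).card = ∑ B ∈ L, (A ∩ B).card :=
      Finset.add_sum_erase L (fun B => (A ∩ B).card) hA
    have h3 : ∑ B ∈ L.erase A, (A ∩ B).card = lam * (L.card - 1) := by
      have h4 : ∀ B ∈ L.erase A, (A ∩ B).card = lam := fun B hB =>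
        hint A hA B (Finset.mem_of_mem_erase hB) (Ne.symm (Finset.ne_of_mem_erase hB))
      rw [Finset.sum_congr rfl h4, Finset.sum_const, Finset.card_erase_of_mem hA,
        smul_eq_mul, mul_comm]
    rw [h1, ← h2, Finset.inter_self, h3]
  have hsum2 : ∑ x ∈ A, repl L x = τ₁ * r₁ + τ₂ * r₂ := by
    rw [← Finset.sum_filter_add_sum_filter_not A (fun x => repl L x = r₁)]
    congr 1
    · rw [hτ₁, hE1A, Finset.sum_congr rfl (fun x hx => (Finset.mem_filter.mp hx).2),
        Finset.sum_const, smul_eq_mul]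
    · rw [hτ₂, hE2A]
      rw [Finset.sum_congr rfl (fun x hx => ?_), Finset.sum_const, smul_eq_mul]
      have h1 := hrepl x (hAX (Finset.mem_filter.mp hx).1)
      have h2 := (Finset.mem_filter.mp hx).2
      tauto
  have hv : 1 ≤ X.card := by
    rw [← hcard]
    exact Finset.card_pos.mpr ⟨A, hA⟩
  -- integer relations
  have e1 : (τ₁ : ℤ) + τ₂ = A.card := by exact_mod_cast hpart
  have e2 : (τ₁ : ℤ) * r₁ + τ₂ * r₂ = A.card + lam * ((X.card : ℤ) - 1) := by
    have h := hsum2.symm.trans hkey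
    rw [hcard] at h
    have h' : (τ₁ : ℤ) * r₁ + τ₂ * r₂ = (A.card : ℤ) + lam * ((X.card - 1 : ℕ) : ℤ) := by
      exact_mod_cast h
    rwa [Nat.cast_sub hv, Nat.cast_one] at h'
  have e3 : (r₁ : ℤ) + r₂ = X.card + 1 := by exact_mod_cast hsum
  have e4 : (lam : ℤ) * ((X.card : ℤ) - 1) = lam * ((r₁ : ℤ) + r₂ - 2) := by
    have : ((X.card : ℤ) - 1) = (r₁ : ℤ) + r₂ - 2 := by linarith
    rw [this]
  have hZ : (τ₁ : ℤ) * ((r₁:ℤ) - 1) + τ₂ * ((r₂:ℤ) - 1)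
      = lam * ((r₁:ℤ) - 1) + lam * ((r₂:ℤ) - 1) := by
    linear_combination e2 - e1 + e4
  have hrρ : ((r₁:ℤ) - 1) * d = ((r₂:ℤ) - 1) * c := by
    have h1 : ((r₁ - 1 : ℕ) : ℤ) * d = ((r₂ - 1 : ℕ) : ℤ) * c := by exact_mod_cast hρ
    rwa [Nat.cast_sub (by omega), Nat.cast_sub (by omega), Nat.cast_one] at h1
  have hZ' : ((τ₁:ℤ) - lam) * ((r₁:ℤ) - 1) + ((τ₂:ℤ) - lam) * ((r₂:ℤ) - 1) = 0 := by
    linear_combination hZ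
  have hr2Z : (2:ℤ) ≤ r₂ := by exact_mod_cast hr2
  have h0 : ((r₂:ℤ) - 1) ≠ 0 := by linarith
  have h1 : ((r₂:ℤ) - 1) * (((τ₁:ℤ) - lam) * c + ((τ₂:ℤ) - lam) * d) = 0 := by
    linear_combination (d : ℤ) * hZ' - ((τ₁:ℤ) - lam) * hrρ
  have huc : ((τ₁:ℤ) - lam) * c + ((τ₂:ℤ) - lam) * d = 0 := by
    rcases mul_eq_zero.mp h1 with h | h
    · exact absurd h h0
    · exact h
  have hco : IsCoprime (d : ℤ) (c : ℤ) := Nat.isCoprime_iff_coprime.mpr hcd.symm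
  have hdvd : (d : ℤ) ∣ ((τ₁:ℤ) - lam) := by
    refine hco.dvd_of_dvd_mul_right ⟨-((τ₂:ℤ) - lam), ?_⟩
    linear_combination huc
  obtain ⟨s, hs⟩ := hdvd
  have hd0 : (d : ℤ) ≠ 0 := by exact_mod_cast hd.ne'
  have hu₂ : (τ₂:ℤ) - lam = -s * c := by
    have h2 : (d:ℤ) * (((τ₂:ℤ) - lam) + s * c) = 0 := by
      linear_combination huc - (c : ℤ) * hs
    rcases mul_eq_zero.mp h2 with h | h
    · exact absurd h hd0
    · linarith
  have G1 : (τ₁ : ℤ) = lam + s * d := by linear_combination hs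
  have G2 : (τ₂ : ℤ) = lam - s * c := by linear_combination hu₂
  have G3 : (A.card : ℤ) = 2 * lam - s * ((c:ℤ) - d) := by
    linear_combination -e1 + hs + hu₂
  have hcdZ : (0:ℤ) < (c:ℤ) - d := by
    have : (d:ℤ) < c := by exact_mod_cast hc
    linarith
  have hdZ : (0:ℤ) < d := by exact_mod_cast hd
  have hcZ : (1:ℤ) ≤ c := by linarith
  refine ⟨-s, by linear_combination hs, by linear_combination hu₂,
    by linear_combination -e1 + hs + hu₂, ?_, ?_, ?_⟩
  · intro hAc
    have hAcZ : (A.card : ℤ) = 2 * lam := by exact_mod_cast hAc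
    have hs0 : s = 0 := by
      have h5 : s * ((c:ℤ) - d) = 0 := by linarith [hAcZ ▸ G3]
      rcases mul_eq_zero.mp h5 with h | h
      · exact h
      · exact absurd h (by linarith)
    constructor
    · have h6 : (τ₁ : ℤ) = lam := by rw [G1, hs0]; ring
      exact_mod_cast h6
    · have h6 : (τ₂ : ℤ) = lam := by rw [G2, hs0]; ring
      exact_mod_cast h6
  · intro hAc
    have hAcZ : (A.card : ℤ) < 2 * lam := by exact_mod_cast hAc
    have hspos : 1 ≤ s := by
      by_contra h
      push_neg at h
      have h5 : s ≤ 0 := by omega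
      have h6 : s * ((c:ℤ) - d) ≤ 0 := mul_nonpos_of_nonpos_of_nonneg h5 hcdZ.le
      linarith
    constructor
    · have h7 : (c:ℤ) ≤ s * c := le_mul_of_one_le_left (by linarith) hspos
      have h6 : (τ₂ : ℤ) < lam := by linarith
      exact_mod_cast h6
    · have h7 : (d:ℤ) ≤ s * d := le_mul_of_one_le_left hdZ.le hspos
      have h6 : (lam : ℤ) < τ₁ := by linarith
      exact_mod_cast h6
  · intro hAc
    have hAcZ : 2 * (lam:ℤ) < A.card := by exact_mod_cast hAc
    have hsneg : s ≤ -1 := by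
      by_contra h
      push_neg at h
      have h5 : 0 ≤ s := by omega
      have h6 : 0 ≤ s * ((c:ℤ) - d) := mul_nonneg h5 hcdZ.le
      linarith
    constructor
    · have h7 : s * (d:ℤ) ≤ -1 * d := mul_le_mul_of_nonneg_right hsneg hdZ.le
      have h6 : (τ₁ : ℤ) < lam := by linarith
      exact_mod_cast h6
    · have h7 : s * (c:ℤ) ≤ -1 * c := mul_le_mul_of_nonneg_right hsneg (by linarith)
      have h6 : (lam : ℤ) < τ₂ := by linarith
      exact_mod_cast h6
end

section
/- In a Ryser design of order v and index λ with replication numbers r₁ > r₂ and eᵢ points of replication number rᵢ, one has e₁r₁ + e₂r₂ = λ(v-1) + r₁r₂; equivalently, the sum of all block sizes equals λ(v-1) + r₁r₂. -/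
open scoped symmDiff

section helpers
open Finset
lemma repl_eq_sum {α : Type*} [DecidableEq α] (L : Finset (Finset α)) (x : α) :
    repl L x = ∑ B ∈ L, if x ∈ B then 1 else 0 := by
  rw [repl, Finset.card_filter]

lemma sum_ind {α : Type*} [DecidableEq α] (X B : Finset α) (h : B ⊆ X) :
    (∑ x ∈ X, if x ∈ B then 1 else 0) = B.card := by
  rw [← Finset.card_filter, Finset.filter_mem_eq_inter, Finset.inter_eq_right.mpr h]

lemma sum_card_eq_sum_repl {α : Type*} [DecidableEq α] (X : Finset α)
    (L : Finset (Finset α)) (hsub : ∀ B ∈ L, B ⊆ X) :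
    ∑ B ∈ L, B.card = ∑ x ∈ X, repl L x := by
  calc ∑ B ∈ L, B.card = ∑ B ∈ L, ∑ x ∈ X, if x ∈ B then 1 else 0 :=
        Finset.sum_congr rfl (fun B hB => (sum_ind X B (hsub B hB)).symm)
    _ = ∑ x ∈ X, ∑ B ∈ L, if x ∈ B then 1 else 0 := Finset.sum_comm
    _ = ∑ x ∈ X, repl L x := by simp [repl_eq_sum]

lemma sum_repl_sq {α : Type*} [DecidableEq α] (X : Finset α)
    (L : Finset (Finset α)) (hsub : ∀ B ∈ L, B ⊆ X) :
    ∑ x ∈ X, repl L x * repl L x = ∑ B₁ ∈ L, ∑ B₂ ∈ L, (B₁ ∩ B₂).card := by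
  have step : ∀ x, repl L x * repl L x
      = ∑ B₁ ∈ L, ∑ B₂ ∈ L, if x ∈ B₁ ∩ B₂ then 1 else 0 := by
    intro x
    rw [repl_eq_sum, Finset.sum_mul_sum]
    refine Finset.sum_congr rfl fun B₁ _ => Finset.sum_congr rfl fun B₂ _ => ?_
    by_cases h1 : x ∈ B₁ <;> by_cases h2 : x ∈ B₂ <;> simp [h1, h2]
  calc ∑ x ∈ X, repl L x * repl L x
      = ∑ x ∈ X, ∑ B₁ ∈ L, ∑ B₂ ∈ L, if x ∈ B₁ ∩ B₂ then 1 else 0 := by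
        exact Finset.sum_congr rfl fun x _ => step x
    _ = ∑ B₁ ∈ L, ∑ x ∈ X, ∑ B₂ ∈ L, if x ∈ B₁ ∩ B₂ then 1 else 0 := Finset.sum_comm
    _ = ∑ B₁ ∈ L, ∑ B₂ ∈ L, ∑ x ∈ X, if x ∈ B₁ ∩ B₂ then 1 else 0 :=
        Finset.sum_congr rfl fun B₁ _ => Finset.sum_comm
    _ = ∑ B₁ ∈ L, ∑ B₂ ∈ L, (B₁ ∩ B₂).card :=
        Finset.sum_congr rfl fun B₁ h₁ => Finset.sum_congr rfl fun B₂ h₂ =>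
          sum_ind X _ ((Finset.inter_subset_left).trans (hsub B₁ h₁))

lemma sum_inter_eq {α : Type*} [DecidableEq α] (L : Finset (Finset α)) (lam : ℕ)
    (hl : ∀ B₁ ∈ L, ∀ B₂ ∈ L, B₁ ≠ B₂ → (B₁ ∩ B₂).card = lam) :
    ∑ B₁ ∈ L, ∑ B₂ ∈ L, (B₁ ∩ B₂).card
      = (∑ B ∈ L, B.card) + L.card * ((L.card - 1) * lam) := by
  have h : ∀ B₁ ∈ L, ∑ B₂ ∈ L, (B₁ ∩ B₂).card = B₁.card + (L.card - 1) * lam := by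
    intro B₁ h₁
    rw [← Finset.add_sum_erase L _ h₁, Finset.inter_self]
    congr 1
    rw [Finset.sum_congr rfl (fun B₂ h₂ => hl B₁ h₁ B₂ (Finset.mem_of_mem_erase h₂)
      (Ne.symm (Finset.ne_of_mem_erase h₂))), Finset.sum_const, Finset.card_erase_of_mem h₁,
      smul_eq_mul]
  rw [Finset.sum_congr rfl h, Finset.sum_add_distrib, Finset.sum_const, smul_eq_mul]

lemma split_sum {α : Type*} [DecidableEq α] (X : Finset α) (L : Finset (Finset α))
    (r₁ r₂ : ℕ) (hne : r₁ ≠ r₂) (hrepl : ∀ x ∈ X, repl L x = r₁ ∨ repl L x = r₂)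
    (f : ℕ → ℕ) :
    ∑ x ∈ X, f (repl L x)
      = (X.filter (fun x => repl L x = r₁)).card * f r₁
        + (X.filter (fun x => repl L x = r₂)).card * f r₂ := by
  have hf2 : X.filter (fun x => repl L x = r₂)
      = X.filter (fun x => ¬ repl L x = r₁) := by
    apply Finset.filter_congr
    intro x hx
    rcases hrepl x hx with h | h <;> simp [h, hne, hne.symm]
  rw [← Finset.sum_filter_add_sum_filter_not X (fun x => repl L x = r₁), hf2]
  congr 1
  · rw [Finset.sum_congr rfl (fun x hx => by rw [(Finset.mem_filter.mp hx).2]),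
      Finset.sum_const, smul_eq_mul]
  · rw [Finset.sum_congr rfl (fun x hx => ?_), Finset.sum_const, smul_eq_mul]
    have hx' := Finset.mem_filter.mp hx
    rcases hrepl x hx'.1 with h | h
    · exact absurd h hx'.2
    · rw [h]

end helpers

/-- In a Ryser design of order `v` and index `λ` with replication numbers `r₁ > r₂`,
one has `e₁r₁ + e₂r₂ = λ(v-1) + r₁r₂`; equivalently the sum of all block sizes equals
`λ(v-1) + r₁r₂`. -/
theorem sum_block_sizes {α : Type*} [DecidableEq α] (v lam r₁ r₂ : ℕ) (X : Finset α)
    (L : Finset (Finset α)) (hX : X.card = v)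
    (hD : IsRyserDesign X L lam)
    (hrepl : ∀ x ∈ X, repl L x = r₁ ∨ repl L x = r₂)
    (hr : r₂ < r₁) (hsum : r₁ + r₂ = v + 1) :
    (X.filter (fun x => repl L x = r₁)).card * r₁
        + (X.filter (fun x => repl L x = r₂)).card * r₂
      = lam * (v - 1) + r₁ * r₂ ∧
    ∑ B ∈ L, B.card = lam * (v - 1) + r₁ * r₂ := by
  obtain ⟨hlam, hcard, hsub, hl, hbig, B₁, hB₁, B₂, hB₂, hBne⟩ := hD
  set e₁ := (X.filter (fun x => repl L x = r₁)).card with he₁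
  set e₂ := (X.filter (fun x => repl L x = r₂)).card with he₂
  have hLv : L.card = v := by rw [hcard, hX]
  have hv : 1 ≤ v := by
    rw [← hLv]
    exact Finset.card_pos.mpr ⟨B₁, hB₁⟩
  have hne : r₁ ≠ r₂ := Nat.ne_of_gt hr
  -- e₁ + e₂ = v
  have he : e₁ + e₂ = v := by
    rw [he₁, he₂, show X.filter (fun x => repl L x = r₂)
        = X.filter (fun x => ¬ repl L x = r₁) from ?_,
      Finset.card_filter_add_card_filter_not, hX]
    apply Finset.filter_congr
    intro x hx
    rcases hrepl x hx with h | h <;> simp [h, hne, hne.symm]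
  have hS : ∑ x ∈ X, repl L x = e₁ * r₁ + e₂ * r₂ := by
    simpa using split_sum X L r₁ r₂ hne hrepl id
  have hQ : ∑ x ∈ X, repl L x * repl L x = e₁ * (r₁ * r₁) + e₂ * (r₂ * r₂) :=
    split_sum X L r₁ r₂ hne hrepl (fun n => n * n)
  have hcount : e₁ * (r₁ * r₁) + e₂ * (r₂ * r₂)
      = (e₁ * r₁ + e₂ * r₂) + v * ((v - 1) * lam) := by
    rw [← hQ, ← hS, sum_repl_sq X L hsub, sum_inter_eq L lam hl,
      sum_card_eq_sum_repl X L hsub, hLv]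
  have key : e₁ * r₁ + e₂ * r₂ = lam * (v - 1) + r₁ * r₂ := by
    have hzkey : (v : ℤ) * (e₁ * r₁ + e₂ * r₂) = v * (lam * (v - 1) + r₁ * r₂) := by
      have h1 : (e₁ : ℤ) + e₂ = v := by exact_mod_cast he
      have h2 : (r₁ : ℤ) + r₂ = v + 1 := by exact_mod_cast hsum
      have h3 : (e₁ : ℤ) * (r₁ * r₁) + e₂ * (r₂ * r₂)
          = (e₁ * r₁ + e₂ * r₂) + v * ((v - 1) * lam) := by
        have := hcount
        zify [hv] at this
        exact this
      linear_combination h3 - (e₁ * (r₁ : ℤ) + e₂ * r₂) * h2 + (r₁ : ℤ) * r₂ * h1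
    have : (e₁ : ℤ) * r₁ + e₂ * r₂ = lam * ((v : ℤ) - 1) + r₁ * r₂ :=
      mul_left_cancel₀ (Nat.cast_ne_zero.mpr (Nat.one_le_iff_ne_zero.mp hv)) hzkey
    zify [hv]
    exact this
  refine ⟨key, ?_⟩
  rw [sum_card_eq_sum_repl X L hsub, hS, key]
end

section
/- Let V be a v-set, let Ω be a family of v distinct nonempty subsets of V, and let A and B be distinct members of Ω. If Ω' = f_A(Ω) and Ω'' = f_{A△B}(Ω'), then Ω'' = f_B(Ω). -/
open scoped symmDiff

/-- A family of `|V|` distinct nonempty subsets of the finite set `V`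
(distinctness is built into `Finset`). -/
def GoodFamily {α : Type*} [DecidableEq α] (V : Finset α) (L : Finset (Finset α)) : Prop :=
  L.card = V.card ∧ ∀ B ∈ L, B ⊆ V ∧ B.Nonempty

/-- If `Ω' = f_A(Ω)` and `Ω'' = f_{A ∆ B}(Ω')` for distinct `A, B ∈ Ω`,
then `Ω'' = f_B(Ω)`. -/
theorem fA_comp {α : Type*} [DecidableEq α] (V : Finset α) (L : Finset (Finset α))
    (hL : GoodFamily V L) (A B : Finset α) (hA : A ∈ L) (hB : B ∈ L) (hAB : A ≠ B) :
    blockComp (A ∆ B) (blockComp A L) = blockComp B L := by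
  have hBne : B ≠ ⊥ := by
    simpa [Finset.bot_eq_empty, ← Finset.nonempty_iff_ne_empty] using (hL.2 B hB).2
  have hABA : A ∆ B ≠ A := fun h => hBne (symmDiff_eq_left.mp h)
  have key : ∀ C : Finset α, (A ∆ B) ∆ (A ∆ C) = B ∆ C := fun C => by
    rw [symmDiff_comm A B, symmDiff_assoc, symmDiff_symmDiff_cancel_left]
  ext S
  simp only [blockComp, Finset.mem_insert, Finset.mem_image, Finset.mem_erase]
  constructor
  · rintro (hS | ⟨T, ⟨hT1, (hT2 | ⟨C, ⟨hC1, hC2⟩, hT2⟩)⟩, hS⟩)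
    · exact Or.inr ⟨A, ⟨hAB, hA⟩, by rw [hS, symmDiff_comm]⟩
    · left; rw [← hS, hT2, symmDiff_comm A B, symmDiff_symmDiff_cancel_right]
    · refine Or.inr ⟨C, ⟨fun h => hT1 (by rw [← hT2, h]), hC2⟩, ?_⟩
      rw [← hS, ← hT2, key C]
  · rintro (hS | ⟨C, ⟨hC1, hC2⟩, hS⟩)
    · refine Or.inr ⟨A, ⟨hABA.symm, Or.inl rfl⟩, ?_⟩
      rw [hS, symmDiff_comm A B, symmDiff_assoc, symmDiff_self, symmDiff_bot]
    · by_cases hCA : C = A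
      · left; rw [← hS, hCA, symmDiff_comm]
      · refine Or.inr ⟨A ∆ C, ⟨fun h => hC1 ((symmDiff_right_injective A) h),
          Or.inr ⟨C, ⟨hCA, hC2⟩, rfl⟩⟩, by rw [key C, hS]⟩
end

section
/- Let Ω be a family of v distinct nonempty subsets of a v-set V, and suppose Ω = Ω₀ → Ω₁ → ⋯ → Ωₙ = Ω' is a sequence of families where each step Ωᵢ₋₁ → Ωᵢ applies either the identity map g or a block complementation f_{Aᵢ} with respect to some member Aᵢ of Ωᵢ₋₁. Then either Ω' = Ω, or Ω' = f_A(Ω) for some A ∈ Ω. -/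
open scoped symmDiff

/-- One step of the sequence: either the identity map `g`, or block complementation
with respect to a member of the current family. -/
def RStep {α : Type*} [DecidableEq α] (L L' : Finset (Finset α)) : Prop :=
  L' = L ∨ ∃ A ∈ L, L' = blockComp A L

lemma symmDiff_inj {α : Type*} [DecidableEq α] (A : Finset α) :
    Function.Injective (fun B : Finset α => A ∆ B) := fun x y h => by
  simpa using congrArg (fun t => A ∆ t) h

lemma blockComp_invol {α : Type*} [DecidableEq α] {A : Finset α} {L : Finset (Finset α)}
    (hA : A ∈ L) (hne : ∀ B ∈ L, B.Nonempty) : blockComp A (blockComp A L) = L := by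
  have hAnS : A ∉ (L.erase A).image (fun B => A ∆ B) := by
    intro hmem
    obtain ⟨B, hB, hEq⟩ := Finset.mem_image.mp hmem
    have : B = ∅ := symmDiff_eq_left.mp hEq
    exact (hne B (Finset.mem_of_mem_erase hB)).ne_empty this
  unfold blockComp
  rw [Finset.erase_insert hAnS, Finset.image_image]
  have : ((fun B : Finset α => A ∆ B) ∘ fun B => A ∆ B) = id := by
    funext B; simp [symmDiff_symmDiff_cancel_left]
  rw [this, Finset.image_id, Finset.insert_erase hA]

lemma blockComp_comp {α : Type*} [DecidableEq α] {A B : Finset α} {L : Finset (Finset α)}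
    (hA : A ∈ L) (hB : B ∈ L) (hAB : B ≠ A) (hne : ∀ C ∈ L, C.Nonempty) :
    blockComp (A ∆ B) (blockComp A L) = blockComp B L := by
  have hBne : B ≠ ∅ := (hne B hB).ne_empty
  have hCA : A ∆ B ≠ A := fun h => hBne (symmDiff_eq_left.mp h)
  unfold blockComp
  have h1 : (insert A ((L.erase A).image (fun C => A ∆ C))).erase (A ∆ B)
      = insert A (((L.erase A).erase B).image (fun C => A ∆ C)) := by
    rw [Finset.erase_insert_of_ne hCA.symm,
      Finset.image_erase (symmDiff_inj A) (L.erase A) B]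
  have hAmem : A ∈ L.erase B := Finset.mem_erase.mpr ⟨fun h => hAB h.symm, hA⟩
  have h2 : L.erase B = insert A ((L.erase A).erase B) := by
    rw [Finset.erase_right_comm, Finset.insert_erase hAmem]
  rw [h1, h2, Finset.image_insert, Finset.image_insert, Finset.image_image]
  have hBA : (A ∆ B) ∆ A = B := by rw [symmDiff_comm, symmDiff_symmDiff_cancel_left]
  have hcomp : ((fun C : Finset α => (A ∆ B) ∆ C) ∘ fun C => A ∆ C)
      = fun C => B ∆ C := by
    funext C
    show (A ∆ B) ∆ (A ∆ C) = B ∆ C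
    rw [symmDiff_comm A B, symmDiff_assoc, symmDiff_symmDiff_cancel_left]
  rw [hBA, hcomp, symmDiff_comm B A, Finset.insert_comm]

/-- Any finite sequence of identity maps and block complementations, starting from a
family `Ω` of `v` distinct nonempty subsets of a `v`-set `V`, produces either `Ω`
itself or `f_A(Ω)` for a single `A ∈ Ω`. -/
theorem sequence_collapse {α : Type*} [DecidableEq α] (V : Finset α)
    (L L' : Finset (Finset α)) (hL : GoodFamily V L)
    (h : Relation.ReflTransGen RStep L L') :
    L' = L ∨ ∃ A ∈ L, L' = blockComp A L := by
  have hne : ∀ B ∈ L, B.Nonempty := fun B hB => (hL.2 B hB).2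
  induction h with
  | refl => exact Or.inl rfl
  | tail _ step ih =>
    rename_i M L'
    rcases ih with hM | ⟨A, hA, hM⟩
    · subst hM
      exact step
    · subst hM
      rcases step with h | ⟨C, hC, hC'⟩
      · exact Or.inr ⟨A, hA, h⟩
      · rcases Finset.mem_insert.mp hC with rfl | hC
        · exact Or.inl (hC' ▸ blockComp_invol hA hne)
        · obtain ⟨B, hB, rfl⟩ := Finset.mem_image.mp hC
          have hB' : B ∈ L := Finset.mem_of_mem_erase hB
          have hBA : B ≠ A := (Finset.mem_erase.mp hB).1
          exact Or.inr ⟨B, hB', hC' ▸ blockComp_comp hA hB' hBA hne⟩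
end

section
/- Let Ω be a Ryser system with parameter triple (v, r₁, r₂) on a v-set V. Then every family Ω' in the equivalence class of Ω under ∼ is also a Ryser system with the same parameter triple (v, r₁, r₂). -/
open scoped symmDiff

/-- `DesignSim M L` : the family `M` is obtained from `L` by the identity or by a single
block complementation with respect to a member of `L` (the relation `∼`). -/
def DesignSim {α : Type*} [DecidableEq α] (M L : Finset (Finset α)) : Prop :=
  M = L ∨ ∃ A ∈ L, M = blockComp A L

/-- A Ryser system with parameter triple `(v, r₁, r₂)`: a family of `v` distinct
nonempty subsets of the `v`-set `V` with `r₁ > r₂`, `r₁ + r₂ = v + 1`, such that every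
point lies in exactly `r₁` or exactly `r₂` members. -/
def IsRyserSystem {α : Type*} [DecidableEq α] (V : Finset α) (L : Finset (Finset α))
    (r₁ r₂ : ℕ) : Prop :=
  GoodFamily V L ∧ r₂ < r₁ ∧ r₁ + r₂ = V.card + 1 ∧
    ∀ x ∈ V, repl L x = r₁ ∨ repl L x = r₂

/-- Every family equivalent to a Ryser system with parameter triple `(v, r₁, r₂)`
is again a Ryser system with the same parameter triple. -/
theorem ryser_system_equiv {α : Type*} [DecidableEq α] (V : Finset α)
    (L : Finset (Finset α)) (r₁ r₂ : ℕ) (h : IsRyserSystem V L r₁ r₂)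
    (M : Finset (Finset α)) (hM : DesignSim M L) :
    IsRyserSystem V M r₁ r₂ := by
  obtain rfl | ⟨A, hA, rfl⟩ := hM
  · exact h
  obtain ⟨⟨hcard, hsub⟩, hr, hsum, hrep⟩ := h
  have hAne : A.Nonempty := (hsub A hA).2
  have hAV : A ⊆ V := (hsub A hA).1
  have hv1 : 1 ≤ V.card := by
    rw [← hcard]; exact Finset.card_pos.mpr ⟨A, hA⟩
  have hinj : Set.InjOn (fun B => A ∆ B) (L.erase A) := by
    intro B _ C _ hBC
    exact symmDiff_right_injective A hBC
  have hAnotimg : A ∉ (L.erase A).image (fun B => A ∆ B) := by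
    intro hmem
    obtain ⟨B, hB, hBA⟩ := Finset.mem_image.mp hmem
    have hBe : B = ∅ := by
      have := symmDiff_eq_left.mp hBA; simpa using this
    have hBne := (hsub B (Finset.mem_of_mem_erase hB)).2
    simp [hBe] at hBne
  have hMcard : (blockComp A L).card = V.card := by
    rw [blockComp, Finset.card_insert_of_notMem hAnotimg,
      Finset.card_image_of_injOn hinj, Finset.card_erase_of_mem hA, hcard]
    omega
  refine ⟨⟨hMcard, ?_⟩, hr, hsum, ?_⟩
  · intro B hB
    rw [blockComp, Finset.mem_insert] at hB
    rcases hB with rfl | hB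
    · exact ⟨hAV, hAne⟩
    obtain ⟨C, hC, rfl⟩ := Finset.mem_image.mp hB
    have hCL := Finset.mem_of_mem_erase hC
    refine ⟨subset_trans symmDiff_le_sup (Finset.union_subset hAV ((hsub C hCL).1)), ?_⟩
    rw [Finset.nonempty_iff_ne_empty]
    intro hempty
    have hAC : A = C := symmDiff_eq_bot.mp (by simpa using hempty)
    exact (Finset.ne_of_mem_erase hC) hAC.symm
  · intro x hx
    have key : repl (blockComp A L) x =
        ((L.erase A).filter (fun B => x ∈ A ∆ B)).card + (if x ∈ A then 1 else 0) := by
      have hinj' : Set.InjOn (fun B => A ∆ B)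
          ((L.erase A).filter (fun a => x ∈ A ∆ a)) :=
        hinj.mono (Finset.coe_subset.mpr (Finset.filter_subset _ _))
      have hAnotimg2 : A ∉ ((L.erase A).filter (fun a => x ∈ A ∆ a)).image
          (fun B => A ∆ B) :=
        fun hm => hAnotimg (Finset.image_subset_image (Finset.filter_subset _ _) hm)
      rw [repl, blockComp, Finset.filter_insert, Finset.filter_image]
      by_cases hxA : x ∈ A
      · rw [if_pos hxA, if_pos hxA, Finset.card_insert_of_notMem hAnotimg2,
          Finset.card_image_of_injOn hinj']
      · rw [if_neg hxA, if_neg hxA, Finset.card_image_of_injOn hinj']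
        simp
    have hL : repl L x =
        ((L.erase A).filter (fun B => x ∈ B)).card + (if x ∈ A then 1 else 0) := by
      rw [repl]
      conv_lhs => rw [← Finset.insert_erase hA]
      rw [Finset.filter_insert]
      by_cases hxA : x ∈ A
      · rw [if_pos hxA, if_pos hxA, Finset.card_insert_of_notMem
          (fun hmem => (Finset.notMem_erase A L) (Finset.mem_of_mem_filter _ hmem))]
      · rw [if_neg hxA, if_neg hxA]
        simp
    have hrx := hrep x hx
    by_cases hxA : x ∈ A
    · have hcongr : (L.erase A).filter (fun B => x ∈ A ∆ B)
          = (L.erase A).filter (fun B => ¬ x ∈ B) := by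
        apply Finset.filter_congr
        intro B _
        simp [Finset.mem_symmDiff, hxA]
      have hsplit := Finset.card_filter_add_card_filter_not
        (s := L.erase A) (p := fun B => x ∈ B)
      have hecard : (L.erase A).card = V.card - 1 := by
        rw [Finset.card_erase_of_mem hA, hcard]
      rw [hcongr] at key
      simp only [hxA, if_pos] at key hL
      omega
    · have hcongr : (L.erase A).filter (fun B => x ∈ A ∆ B)
          = (L.erase A).filter (fun B => x ∈ B) := by
        apply Finset.filter_congr
        intro B _
        simp [Finset.mem_symmDiff, hxA]
      rw [hcongr] at key
      simp only [hxA, if_neg, not_false_iff] at key hL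
      omega
end

section
/- Assume the hypothesis that every Ryser design that has a block of even size is of Type-1. Then every Ryser design is of Type-1, i.e. the Ryser design conjecture is true. -/
open scoped symmDiff

/-- A Ryser design is of Type-1 if it is obtained from a symmetric design by block
complementation with respect to one of its blocks. -/
def IsType1 {α : Type*} [DecidableEq α] (X : Finset α) (L : Finset (Finset α)) : Prop :=
  ∃ (M : Finset (Finset α)) (k lam : ℕ), IsSymmetricDesign X M k lam ∧
    ∃ A ∈ M, L = blockComp A M

section Aux
variable {α : Type*} [DecidableEq α]

lemma card_symmDiff_aux (s t : Finset α) :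
    (s ∆ t).card + 2 * (s ∩ t).card = s.card + t.card := by
  have h1 := Finset.card_inter_add_card_sdiff s t
  have h2 := Finset.card_inter_add_card_sdiff t s
  have hd : Disjoint (s \ t) (t \ s) := disjoint_sdiff_sdiff
  have h3 : (s ∆ t).card = (s \ t).card + (t \ s).card := by
    rw [symmDiff_def, Finset.sup_eq_union, Finset.card_union_of_disjoint hd]
  rw [Finset.inter_comm t s] at h2
  omega

lemma mem_blockComp {A S : Finset α} {L : Finset (Finset α)} :
    S ∈ blockComp A L ↔ S = A ∨ ∃ B ∈ L, B ≠ A ∧ S = A ∆ B := by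
  simp only [blockComp, Finset.mem_insert, Finset.mem_image, Finset.mem_erase]
  constructor
  · rintro (h | ⟨B, ⟨hBA, hBL⟩, rfl⟩)
    · exact Or.inl h
    · exact Or.inr ⟨B, hBL, hBA, rfl⟩
  · rintro (h | ⟨B, hBL, hBA, rfl⟩)
    · exact Or.inl h
    · exact Or.inr ⟨B, ⟨hBA, hBL⟩, rfl⟩

lemma symmDiff_ne_self {A B : Finset α} (hB : B ≠ ∅) : A ∆ B ≠ A := fun h => hB <| by
  have h' : A ∆ B = A ∆ ⊥ := by rw [symmDiff_bot]; exact h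
  simpa [Finset.bot_eq_empty] using symmDiff_right_injective A h'

lemma card_blockComp {A : Finset α} {L : Finset (Finset α)} (hA : A ∈ L)
    (hne : ∀ B ∈ L, B ≠ ∅) : (blockComp A L).card = L.card := by
  have hinj : Set.InjOn (fun B => A ∆ B) (L.erase A) := fun x _ y _ h =>
    symmDiff_right_injective A h
  have hAnot : A ∉ (L.erase A).image (fun B => A ∆ B) := by
    simp only [Finset.mem_image, Finset.mem_erase, not_exists]
    rintro B ⟨⟨hBA, hBL⟩, hEq⟩
    exact symmDiff_ne_self (hne B hBL) hEq
  rw [blockComp, Finset.card_insert_of_notMem hAnot, Finset.card_image_of_injOn hinj,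
    Finset.card_erase_of_mem hA]
  have : 0 < L.card := Finset.card_pos.2 ⟨A, hA⟩
  omega

lemma blockComp_involution {A : Finset α} {L : Finset (Finset α)} (hA : A ∈ L)
    (hne : ∀ B ∈ L, B ≠ ∅) : blockComp A (blockComp A L) = L := by
  ext S
  rw [mem_blockComp]
  constructor
  · rintro (rfl | ⟨T, hT, hTA, rfl⟩)
    · exact hA
    · rw [mem_blockComp] at hT
      rcases hT with rfl | ⟨B, hBL, hBA, rfl⟩
      · exact absurd rfl hTA
      · rwa [symmDiff_symmDiff_cancel_left]
  · intro hS
    by_cases hSA : S = A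
    · exact Or.inl hSA
    · refine Or.inr ⟨A ∆ S, ?_, symmDiff_ne_self (hne S hS), by rw [symmDiff_symmDiff_cancel_left]⟩
      exact mem_blockComp.2 (Or.inr ⟨S, hS, hSA, rfl⟩)

lemma blockComp_shift {A' C : Finset α} {M : Finset (Finset α)} (hA' : A' ∈ M) (hC : C ∈ M)
    (hCA : C ≠ A') (hne : ∀ B ∈ M, B ≠ ∅) :
    blockComp (A' ∆ C) (blockComp A' M) = blockComp C M := by
  have key : ∀ B : Finset α, (A' ∆ C) ∆ (A' ∆ B) = C ∆ B := by
    intro B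
    rw [symmDiff_symmDiff_symmDiff_comm, symmDiff_self, bot_symmDiff]
  ext S
  rw [mem_blockComp, mem_blockComp]
  constructor
  · rintro (rfl | ⟨T, hT, hTA, rfl⟩)
    · exact Or.inr ⟨A', hA', Ne.symm hCA, symmDiff_comm A' C⟩
    · rw [mem_blockComp] at hT
      rcases hT with rfl | ⟨B, hBM, hBA, rfl⟩
      · left
        rw [symmDiff_comm, symmDiff_symmDiff_cancel_left]
      · rw [key]
        have hBC : B ≠ C := fun h => hTA (by rw [h, symmDiff_comm A' C])
        exact Or.inr ⟨B, hBM, hBC, rfl⟩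
  · rintro (rfl | ⟨B, hBM, hBC, rfl⟩)
    · refine Or.inr ⟨A', mem_blockComp.2 (Or.inl rfl), ?_, ?_⟩
      · intro h
        exact symmDiff_ne_self (hne _ hC) h.symm
      · rw [symmDiff_comm, symmDiff_symmDiff_cancel_left]
    · by_cases hBA : B = A'
      · subst hBA
        exact Or.inl (by rw [symmDiff_comm])
      · refine Or.inr ⟨A' ∆ B, mem_blockComp.2 (Or.inr ⟨B, hBM, hBA, rfl⟩), ?_, (key B).symm⟩
        intro h
        exact hBC (symmDiff_right_injective A' h)

end Aux

/-- If every Ryser design having a block of even size is of Type-1, then every Ryser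
design is of Type-1, i.e. the Ryser design conjecture is true. -/
theorem even_block_hypothesis_implies_conjecture {α : Type*} [DecidableEq α]
    (H : ∀ (X : Finset α) (L : Finset (Finset α)) (lam : ℕ),
      IsRyserDesign X L lam → (∃ B ∈ L, Even B.card) → IsType1 X L) :
    ∀ (X : Finset α) (L : Finset (Finset α)) (lam : ℕ),
      IsRyserDesign X L lam → IsType1 X L := by
  intro X L lam hR
  by_cases he : ∃ B ∈ L, Even B.card
  · exact H X L lam hR he
  push_neg at he
  obtain ⟨hlam, hcard, hsub, hint, hgt, A, hB₁, B₂, hB₂, hne12⟩ := hR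
  have hneB : A ≠ B₂ := fun h => hne12 (by rw [h])
  have hnonempty : ∀ B ∈ L, B ≠ ∅ := by
    intro B hB h
    have h1 := hgt B hB
    rw [h] at h1
    simp at h1
  have hAodd : ¬ Even A.card := he A hB₁
  have hEvenSym : ∀ B ∈ L, B ≠ A → Even ((A ∆ B).card) := by
    intro B hB hBA
    have h1 := card_symmDiff_aux A B
    have h2 : (A ∩ B).card = lam := hint A hB₁ B hB (Ne.symm hBA)
    have hBodd : ¬ Even B.card := he B hB
    rw [Nat.not_even_iff_odd] at hBodd
    have hA' : ¬ Even A.card := hAodd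
    rw [Nat.not_even_iff_odd] at hA'
    obtain ⟨a, ha⟩ := hA'
    obtain ⟨b, hb⟩ := hBodd
    rw [Nat.even_iff]
    omega
  set L' := blockComp A L with hL'
  have hAL' : A ∈ L' := mem_blockComp.2 (Or.inl rfl)
  have hmem : ∀ B ∈ L, B ≠ A → A ∆ B ∈ L' := fun B hB hBA =>
    mem_blockComp.2 (Or.inr ⟨B, hB, hBA, rfl⟩)
  have hAlam : lam < A.card := hgt A hB₁
  have hRy : IsRyserDesign X L' (A.card - lam) := by
    refine ⟨by omega, ?_, ?_, ?_, ?_, ?_⟩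
    · rw [hL', card_blockComp hB₁ hnonempty, hcard]
    · intro S hS
      rcases mem_blockComp.1 hS with rfl | ⟨B', hB', _, rfl⟩
      · exact hsub _ hB₁
      · intro x hx
        rw [Finset.mem_symmDiff] at hx
        rcases hx with ⟨hx, -⟩ | ⟨hx, -⟩
        · exact hsub A hB₁ hx
        · exact hsub B' hB' hx
    · intro C₁ hC₁ C₂ hC₂ hne
      rcases mem_blockComp.1 hC₁ with rfl | ⟨D₁, hD₁, hD₁A, rfl⟩ <;>
        rcases mem_blockComp.1 hC₂ with h2 | ⟨D₂, hD₂, hD₂A, rfl⟩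
      · exact absurd h2.symm hne
      · have heq : C₁ ∩ (C₁ ∆ D₂) = C₁ \ D₂ := by
          ext x; simp [Finset.mem_symmDiff]; tauto
        rw [heq]
        have h1 := Finset.card_inter_add_card_sdiff C₁ D₂
        have h3 : (C₁ ∩ D₂).card = lam := hint C₁ hB₁ D₂ hD₂ (Ne.symm hD₂A)
        omega
      · subst h2
        have heq : (C₂ ∆ D₁) ∩ C₂ = C₂ \ D₁ := by
          ext x; simp [Finset.mem_symmDiff]; tauto
        rw [heq]
        have h1 := Finset.card_inter_add_card_sdiff C₂ D₁
        have h3 : (C₂ ∩ D₁).card = lam := hint C₂ hB₁ D₁ hD₁ (Ne.symm hD₁A)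
        omega
      · have hD : D₁ ≠ D₂ := fun h => hne (by rw [h])
        have e1 := card_symmDiff_aux (A ∆ D₁) (A ∆ D₂)
        have e2 : (A ∆ D₁) ∆ (A ∆ D₂) = D₁ ∆ D₂ := by
          rw [symmDiff_symmDiff_symmDiff_comm, symmDiff_self, bot_symmDiff]
        rw [e2] at e1
        have e3 := card_symmDiff_aux A D₁
        have e4 := card_symmDiff_aux A D₂
        have e5 := card_symmDiff_aux D₁ D₂
        have i1 : (A ∩ D₁).card = lam := hint A hB₁ D₁ hD₁ (Ne.symm hD₁A)
        have i2 : (A ∩ D₂).card = lam := hint A hB₁ D₂ hD₂ (Ne.symm hD₂A)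
        have i3 : (D₁ ∩ D₂).card = lam := hint D₁ hD₁ D₂ hD₂ hD
        omega
    · intro B hB
      rcases mem_blockComp.1 hB with rfl | ⟨D, hD, hDA, rfl⟩
      · omega
      · have e := card_symmDiff_aux A D
        have i : (A ∩ D).card = lam := hint A hB₁ D hD (Ne.symm hDA)
        have := hgt D hD
        omega
    · refine ⟨A, hAL', A ∆ B₂, hmem B₂ hB₂ (Ne.symm hneB), ?_⟩
      have hEv := hEvenSym B₂ hB₂ (Ne.symm hneB)
      intro h
      rw [h] at hAodd
      exact hAodd hEv
  have hev : ∃ B ∈ L', Even B.card :=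
    ⟨A ∆ B₂, hmem B₂ hB₂ (Ne.symm hneB), hEvenSym B₂ hB₂ (Ne.symm hneB)⟩
  obtain ⟨M, k, lam₂, hM, A', hA'M, hLM⟩ := H X L' (A.card - lam) hRy hev
  have hMne : ∀ B ∈ M, B ≠ ∅ := by
    intro B hB h
    have h1 := hM.2.2.2.2.1 B hB
    have h2 := hM.2.2.2.2.2
    have h3 := hM.1
    rw [h] at h1
    simp at h1
    omega
  have hLL' : L = blockComp A L' := (blockComp_involution hB₁ hnonempty).symm
  by_cases hAA' : A = A'
  · subst hAA'
    have hLMeq : L = M := by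
      rw [hLL', hLM, blockComp_involution hA'M hMne]
    exfalso
    apply hne12
    rw [hM.2.2.2.2.1 A (hLMeq ▸ hB₁), hM.2.2.2.2.1 B₂ (hLMeq ▸ hB₂)]
  · have hA_mem : A ∈ blockComp A' M := hLM ▸ hAL'
    rcases mem_blockComp.1 hA_mem with h | ⟨C, hCM, hCA', hACeq⟩
    · exact absurd h hAA'
    refine ⟨M, k, lam₂, hM, C, hCM, ?_⟩
    rw [hLL', hLM, hACeq, blockComp_shift hA'M hCM hCA' hMne]
end

section
/- Let D be a Ryser design of order v and index λ. If D has v - 1 blocks of size 2λ, then D is of Type-1; indeed, if A is the unique non-average block of D, of size k, then D*A is a symmetric (v, k, k - λ) design. -/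
open scoped symmDiff

lemma two_card_inter_add_card_symmDiff {α : Type*} [DecidableEq α] (s t : Finset α) :
    2 * (s ∩ t).card + (s ∆ t).card = s.card + t.card := by
  have h : (s ∆ t) = (s \ t) ∪ (t \ s) := rfl
  rw [h, Finset.card_union_of_disjoint (disjoint_sdiff_sdiff)]
  have h1 := Finset.card_sdiff_add_card_inter s t
  have h2 := Finset.card_sdiff_add_card_inter t s
  rw [Finset.inter_comm t s] at h2
  omega

lemma symmDiff_symmDiff_cancel' {α : Type*} [DecidableEq α] (a b c : Finset α) :
    (a ∆ b) ∆ (a ∆ c) = b ∆ c := by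
  rw [symmDiff_symmDiff_symmDiff_comm, symmDiff_self, bot_symmDiff]


lemma symm_of_nonavg {α : Type*} [DecidableEq α] (lam : ℕ)
    (X : Finset α) (L : Finset (Finset α))
    (hD : IsRyserDesign X L lam)
    (A : Finset α) (hA : A ∈ L)
    (hother : ∀ B ∈ L, B ≠ A → B.card = 2 * lam) :
    IsSymmetricDesign X (blockComp A L) A.card (A.card - lam) := by
  obtain ⟨hlam, hcard, hsub, hint, hgt, -⟩ := hD
  have hkgt : lam < A.card := hgt A hA
  -- sizes of new blocks
  have hsize : ∀ B ∈ L, B ≠ A → (A ∆ B).card = A.card := by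
    intro B hB hBA
    have h1 := two_card_inter_add_card_symmDiff A B
    rw [hint A hA B hB (Ne.symm hBA), hother B hB hBA] at h1
    omega
  -- A is not among the images
  have hAnot : A ∉ (L.erase A).image (fun B => A ∆ B) := by
    intro h
    obtain ⟨B, hB, hEq⟩ := Finset.mem_image.mp h
    have : B = (⊥ : Finset α) := symmDiff_eq_left.mp hEq
    have hB' := hgt B (Finset.mem_of_mem_erase hB)
    simp [this] at hB'
  refine ⟨by omega, ?_, ?_, ?_, ?_, by omega⟩
  · -- cardinality
    rw [blockComp, Finset.card_insert_of_notMem hAnot,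
      Finset.card_image_of_injective _ (symmDiff_right_injective A),
      Finset.card_erase_of_mem hA, ← hcard]
    have : 0 < L.card := Finset.card_pos.mpr ⟨A, hA⟩
    omega
  · -- subsets
    intro B hB
    rcases Finset.mem_insert.mp hB with rfl | hB
    · exact hsub _ hA
    obtain ⟨C, hC, rfl⟩ := Finset.mem_image.mp hB
    have hC' := Finset.mem_of_mem_erase hC
    calc A ∆ C ⊆ A ∪ C := symmDiff_le_sup
    _ ⊆ X := Finset.union_subset (hsub A hA) (hsub C hC')
  · -- intersections
    intro P hP Q hQ hPQ
    have key : ∀ P ∈ blockComp A L, ∀ Q ∈ blockComp A L,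
        P ≠ Q → P.card = A.card ∧ Q.card = A.card ∧ (P ∆ Q).card = 2 * lam := by
      intro P hP Q hQ hPQ
      have hc : ∀ R ∈ blockComp A L, R.card = A.card := by
        intro R hR
        rcases Finset.mem_insert.mp hR with rfl | hR
        · rfl
        obtain ⟨C, hC, rfl⟩ := Finset.mem_image.mp hR
        exact hsize C (Finset.mem_of_mem_erase hC) (Finset.ne_of_mem_erase hC)
      refine ⟨hc P hP, hc Q hQ, ?_⟩
      -- symmDiff of two blocks of blockComp
      rcases Finset.mem_insert.mp hP with rfl | hP'
      · rcases Finset.mem_insert.mp hQ with rfl | hQ'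
        · exact absurd rfl hPQ
        obtain ⟨C, hC, rfl⟩ := Finset.mem_image.mp hQ'
        rw [symmDiff_symmDiff_cancel_left]
        exact hother C (Finset.mem_of_mem_erase hC) (Finset.ne_of_mem_erase hC)
      obtain ⟨B, hB, rfl⟩ := Finset.mem_image.mp hP'
      rcases Finset.mem_insert.mp hQ with rfl | hQ'
      · rw [symmDiff_comm, symmDiff_symmDiff_cancel_left]
        exact hother B (Finset.mem_of_mem_erase hB) (Finset.ne_of_mem_erase hB)
      obtain ⟨C, hC, rfl⟩ := Finset.mem_image.mp hQ'
      rw [symmDiff_symmDiff_cancel']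
      have hBC : B ≠ C := fun h => hPQ (by rw [h])
      have h1 := two_card_inter_add_card_symmDiff B C
      rw [hint B (Finset.mem_of_mem_erase hB) C (Finset.mem_of_mem_erase hC) hBC,
        hother B (Finset.mem_of_mem_erase hB) (Finset.ne_of_mem_erase hB),
        hother C (Finset.mem_of_mem_erase hC) (Finset.ne_of_mem_erase hC)] at h1
      omega
    obtain ⟨h1, h2, h3⟩ := key P hP Q hQ hPQ
    have h4 := two_card_inter_add_card_symmDiff P Q
    omega
  · -- block sizes
    intro B hB
    rcases Finset.mem_insert.mp hB with rfl | hB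
    · rfl
    obtain ⟨C, hC, rfl⟩ := Finset.mem_image.mp hB
    exact hsize C (Finset.mem_of_mem_erase hC) (Finset.ne_of_mem_erase hC)

/-- If a Ryser design of order `v` and index `λ` has `v - 1` blocks of size `2λ`, then
it is of Type-1; indeed, complementing with respect to the unique non-average block `A`
(of size `k`) yields a symmetric `(v, k, k - λ)` design. -/
theorem v_minus_one_average_blocks {α : Type*} [DecidableEq α] (v lam : ℕ)
    (X : Finset α) (L : Finset (Finset α)) (hX : X.card = v)
    (hD : IsRyserDesign X L lam)
    (havg : (L.filter (fun B => B.card = 2 * lam)).card = v - 1) :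
    IsType1 X L ∧
      ∀ A ∈ L, A.card ≠ 2 * lam →
        IsSymmetricDesign X (blockComp A L) A.card (A.card - lam) := by
  obtain ⟨hlam, hcard, hsub, hint, hgt, B₁, hB₁, B₂, hB₂, hne⟩ := hD
  have hLv : L.card = v := by rw [hcard, hX]
  -- there exists a non-average block
  have hexA : ∃ A ∈ L, A.card ≠ 2 * lam := by
    by_contra h
    push_neg at h
    exact hne ((h B₁ hB₁).trans (h B₂ hB₂).symm)
  -- key: any non-average block makes all others average
  have hkey : ∀ A ∈ L, A.card ≠ 2 * lam → ∀ B ∈ L, B ≠ A → B.card = 2 * lam := by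
    intro A hA hAne B hB hBA
    have hsubf : L.filter (fun B => B.card = 2 * lam) ⊆ L.erase A := by
      intro C hC
      rw [Finset.mem_filter] at hC
      refine Finset.mem_erase.mpr ⟨?_, hC.1⟩
      rintro rfl; exact hAne hC.2
    have hce : (L.erase A).card = v - 1 := by
      rw [Finset.card_erase_of_mem hA, hLv]
    have : L.filter (fun B => B.card = 2 * lam) = L.erase A :=
      Finset.eq_of_subset_of_card_le hsubf (by omega)
    have hBin : B ∈ L.filter (fun B => B.card = 2 * lam) := by
      rw [this]; exact Finset.mem_erase.mpr ⟨hBA, hB⟩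
    exact (Finset.mem_filter.mp hBin).2
  have hD' : IsRyserDesign X L lam := ⟨hlam, hcard, hsub, hint, hgt, B₁, hB₁, B₂, hB₂, hne⟩
  constructor
  · obtain ⟨A, hA, hAne⟩ := hexA
    have hsym := symm_of_nonavg lam X L hD' A hA (hkey A hA hAne)
    refine ⟨blockComp A L, A.card, A.card - lam, hsym, A, Finset.mem_insert_self _ _, ?_⟩
    -- L = blockComp A (blockComp A L)
    have hAnot : A ∉ (L.erase A).image (fun B => A ∆ B) := by
      intro h
      obtain ⟨B, hB, hEq⟩ := Finset.mem_image.mp h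
      have : B = (⊥ : Finset α) := symmDiff_eq_left.mp hEq
      have hB' := hgt B (Finset.mem_of_mem_erase hB)
      simp [this] at hB' 
    rw [blockComp, blockComp, Finset.erase_insert hAnot, Finset.image_image]
    have hcomp : ((fun B => A ∆ B) ∘ fun B => A ∆ B) = id := by
      funext B; simp [Function.comp, symmDiff_symmDiff_cancel_left]
    rw [hcomp, Finset.image_id, Finset.insert_erase hA]
  · intro A hA hAne
    exact symm_of_nonavg lam X L hD' A hA (hkey A hA hAne)
end
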